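/- Let G be a finite abelian group and A, B nonempty subsets of G. If |A + B| = |A|, then for every m ≥ 1, |A + m(B − B)| = |A|, where m(B − B) denotes the m-fold sumset of B − B. -/

import Mathlib

open Pointwise

/-- The `m`-fold iterated sumset of a finite set (`foldSum S 0 = {0}`). -/
def foldSum {G : Type*} [AddCommGroup G] [DecidableEq G] (S : Finset G) : ℕ → Finset G
  | 0 => {0}
  | n + 1 => foldSum S n + S

/-! If `|A + B| = |A|`, every translate `A + b` with `b ∈ B` is all of `A + B`, so any two
translates `A + b`, `A + b'` coincide and `A` is stable under adding `b - b'`. Hence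
`A + (B - B) = A`, and this absorption iterates to every `m`-fold sumset of `B - B`. -/

namespace Finset

variable {G : Type*} [AddCommGroup G] [DecidableEq G]

theorem add_eq_add_singleton_of_card_add_eq {A B : Finset G} (h : (A + B).card = A.card)
    {b : G} (hb : b ∈ B) : A + B = A + {b} :=
  (eq_of_subset_of_card_le (add_subset_add_left (singleton_subset_iff.2 hb))
    (by rw [h, card_add_singleton])).symm

theorem add_sub_subset_of_card_add_eq {A B : Finset G} (h : (A + B).card = A.card) :
    A + (B - B) ⊆ A := by
  intro x hx
  obtain ⟨a, ha, d, hd, rfl⟩ := mem_add.1 hx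
  obtain ⟨b, hb, b', hb', rfl⟩ := mem_sub.1 hd
  have hab : a + b ∈ A + {b'} := by
    rw [← add_eq_add_singleton_of_card_add_eq h hb']
    exact add_mem_add ha hb
  obtain ⟨a', ha', _, hb'', hsum⟩ := mem_add.1 hab
  rw [mem_singleton.1 hb''] at hsum
  rwa [show a + (b - b') = a' by rw [← add_sub_assoc, ← hsum, add_sub_cancel_right]]

theorem add_sub_eq_of_card_add_eq {A B : Finset G} (hB : B.Nonempty)
    (h : (A + B).card = A.card) : A + (B - B) = A :=
  (add_sub_subset_of_card_add_eq h).antisymm (subset_add_left A hB.zero_mem_sub)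

theorem add_foldSum_eq_of_add_eq {A S : Finset G} (h : A + S = A) (m : ℕ) :
    A + foldSum S m = A := by
  induction m with
  | zero => exact add_zero A
  | succ n ih => rw [foldSum, ← add_assoc, ih, h]

end Finset

theorem absorption_of_iterated_difference_sets_general {G : Type*} [AddCommGroup G]
    [DecidableEq G] (A B : Finset G) (hB : B.Nonempty)
    (h : (A + B).card = A.card) :
    ∀ m : ℕ, 1 ≤ m → (A + foldSum (B - B) m).card = A.card := fun m _ => by
  rw [Finset.add_foldSum_eq_of_add_eq (Finset.add_sub_eq_of_card_add_eq hB h) m]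

theorem absorption_of_iterated_difference_sets {G : Type*} [AddCommGroup G] [Fintype G]
    [DecidableEq G] (A B : Finset G) (hA : A.Nonempty) (hB : B.Nonempty)
    (h : (A + B).card = A.card) :
    ∀ m : ℕ, 1 ≤ m → (A + foldSum (B - B) m).card = A.card :=
  absorption_of_iterated_difference_sets_general A B hB h
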